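/- For every ε > 0 and every C > 0, there exists a finite connected simple graph G such that edim(G) ≥ C · 2^{dim(G)} and edim(G) ≥ (1 − ε) · |V(G)|. -/

import Mathlib

open SimpleGraph

/-- `S` is a resolving set for `G`: any two distinct vertices are distinguished
by their graph distance to some landmark in `S`. -/
def IsResolvingSet {V : Type*} (G : SimpleGraph V) (S : Set V) : Prop :=
  ∀ u v : V, u ≠ v → ∃ w ∈ S, G.dist u w ≠ G.dist v w

/-- The metric dimension of `G`: the least size of a (finite) resolving set. -/
noncomputable def metricDim {V : Type*} (G : SimpleGraph V) : ℕ :=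
  sInf {k | ∃ S : Finset V, IsResolvingSet G ↑S ∧ S.card = k}

/-- Distance from an edge `e = {u,v}` to a vertex `w`: `min (d(u,w)) (d(v,w))`. -/
noncomputable def edgeDist {V : Type*} (G : SimpleGraph V) (e : Sym2 V) (w : V) : ℕ :=
  Sym2.lift ⟨fun u v => min (G.dist u w) (G.dist v w), fun u v => by simp [min_comm]⟩ e

/-- `S` is an edge resolving set for `G`: any two distinct edges are distinguished
by their distance to some landmark in `S`. -/
def IsEdgeResolvingSet {V : Type*} (G : SimpleGraph V) (S : Set V) : Prop :=
  ∀ e ∈ G.edgeSet, ∀ f ∈ G.edgeSet, e ≠ f → ∃ w ∈ S, edgeDist G e w ≠ edgeDist G f w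

/-- The edge metric dimension of `G`: the least size of a (finite) edge resolving set. -/
noncomputable def edgeMetricDim {V : Type*} (G : SimpleGraph V) : ℕ :=
  sInf {k | ∃ S : Finset V, IsEdgeResolvingSet G ↑S ∧ S.card = k}

/-- `G` contains `H` as a subgraph: there is an injective graph homomorphism `H → G`. -/
def Contains {V W : Type*} (G : SimpleGraph V) (H : SimpleGraph W) : Prop :=
  ∃ f : H →g G, Function.Injective f

/-- The graph `D_k` on `ℤ_{≥0}^k`: distinct points are adjacent iff they differ
by at most 1 in every coordinate. -/
def Dgraph (k : ℕ) : SimpleGraph (Fin k → ℕ) where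
  Adj x y := x ≠ y ∧ ∀ i, x i ≤ y i + 1 ∧ y i ≤ x i + 1
  symm := ⟨fun _x _y h => ⟨h.1.symm, fun i => ⟨(h.2 i).2, (h.2 i).1⟩⟩⟩
  loopless := ⟨fun _x h => h.1 rfl⟩

/-!
Take anchors `aᵢ` (`i < k`), a vertex `b_v` for each `v ∈ {0,1,2}ᵏ`, a vertex `x_T` for each
`T ∈ {0,1}ᵏ` and an apex `g`. Join `aᵢ ~ b_v` when `vᵢ = 0`, `aᵢ ~ x_T` when `Tᵢ = 0`,
`b_v ~ x_{σ v}` where `σ v` marks the coordinates with `vᵢ = 2`, and `g` to every `aᵢ` and `x_T`.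
Then `d(b_v, aⱼ) = vⱼ + 1` and `d(x_T, aⱼ) = Tⱼ + 1`, so the anchors and `g` resolve the graph:
`dim ≤ k + 1`. On the other hand `x_{σ v}` dominates `b_v`, so it is at least as close as `b_v` to
every other vertex; hence only `b_v` and `b_{v'}` separate the edges `x b_v` and `x b_{v'}` when
`σ v = σ v'`. An edge resolving set thus misses at most one `b_v` per fibre of `σ`, giving
`edim ≥ 3ᵏ - 2ᵏ` out of `3ᵏ + 2ᵏ + k + 1` vertices.
-/
namespace SimpleGraph

variable {V : Type*} {G : SimpleGraph V} {u v w x b : V}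

lemma dist_eq_two_of_adj_of_adj (huv : u ≠ v) (hnadj : ¬ G.Adj u v) (huw : G.Adj u w)
    (hwv : G.Adj w v) : G.dist u v = 2 := by
  rw [dist, edist_eq_two_iff.mpr ⟨huv, hnadj, w, huw, hwv.symm⟩]
  rfl

lemma dist_eq_three_of_adj_of_adj_of_adj {y z : V} (huv : u ≠ v) (hnadj : ¬ G.Adj u v)
    (hcommon : ∀ w, G.Adj u w → ¬ G.Adj w v) (huy : G.Adj u y) (hyz : G.Adj y z)
    (hzv : G.Adj z v) : G.dist u v = 3 := by
  let p : G.Walk u v := .cons huy (.cons hyz (.cons hzv .nil))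
  have hlt : 2 < G.edist u v := two_lt_edist_iff.mpr ⟨huv, hnadj,
    Set.eq_empty_iff_forall_notMem.mpr fun w hw => hcommon w hw.1 (G.adj_symm hw.2)⟩
  rw [← p.reachable.coe_dist_eq_edist] at hlt
  exact le_antisymm (dist_le p) (by exact_mod_cast hlt)

/-- `x` dominates `b` when the closed neighbourhood of `b` lies in that of `x`. -/
def Dominates (G : SimpleGraph V) (x b : V) : Prop :=
  G.Adj x b ∧ ∀ y, G.Adj b y → y = x ∨ G.Adj x y

lemma Dominates.dist_le_dist (hxb : G.Dominates x b) (hbw : G.Reachable b w) (hwb : w ≠ b) :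
    G.dist x w ≤ G.dist b w := by
  obtain ⟨p, hp⟩ := hbw.exists_walk_length_eq_dist
  rw [← hp]
  cases p with
  | nil => exact absurd rfl hwb
  | @cons _ y _ hby q =>
    rcases hxb.2 y hby with rfl | hxy
    · exact (dist_le q).trans (by simp)
    · simpa using dist_le (Walk.cons hxy q)

end SimpleGraph

open SimpleGraph

section Resolving

variable {V : Type*} {G : SimpleGraph V}

lemma edgeDist_mk (u v w : V) : edgeDist G s(u, v) w = min (G.dist u w) (G.dist v w) := rfl

lemma metricDim_le_card {S : Finset V} (hS : IsResolvingSet G S) : metricDim G ≤ S.card :=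
  Nat.sInf_le ⟨S, hS, rfl⟩

lemma SimpleGraph.Preconnected.edgeDist_eq_zero_iff (hG : G.Preconnected) {e : Sym2 V}
    {w : V} : edgeDist G e w = 0 ↔ w ∈ e := by
  induction e using Sym2.inductionOn with | hf a b => ?_
  rw [edgeDist_mk, Nat.min_eq_zero_iff, (hG a w).dist_eq_zero_iff, (hG b w).dist_eq_zero_iff,
    Sym2.mem_iff, eq_comm, @eq_comm _ b]

lemma isEdgeResolvingSet_univ (hG : G.Preconnected) : IsEdgeResolvingSet G Set.univ := by
  intro e _ f _ hef
  obtain ⟨w, hw⟩ : ∃ w, ¬ (w ∈ e ↔ w ∈ f) := by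
    by_contra! h
    exact hef (Sym2.ext h)
  refine ⟨w, trivial, fun h => hw ?_⟩
  rw [← hG.edgeDist_eq_zero_iff, ← hG.edgeDist_eq_zero_iff, h]

lemma exists_isEdgeResolvingSet_card_eq_edgeMetricDim [Fintype V] (hG : G.Preconnected) :
    ∃ S : Finset V, IsEdgeResolvingSet G S ∧ S.card = edgeMetricDim G :=
  Nat.sInf_mem (s := {k | ∃ S : Finset V, IsEdgeResolvingSet G S ∧ S.card = k})
    ⟨_, Finset.univ, by simpa using isEdgeResolvingSet_univ hG, rfl⟩

lemma IsEdgeResolvingSet.mem_or_mem_of_dominates {S : Set V} (hS : IsEdgeResolvingSet G S)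
    (hG : G.Preconnected) {x b b' : V} (hb : G.Dominates x b) (hb' : G.Dominates x b')
    (hbb' : b ≠ b') : b ∈ S ∨ b' ∈ S := by
  by_contra! hnot
  have hne : s(x, b) ≠ s(x, b') := by simp [hbb', hb'.1.ne]
  obtain ⟨w, hwS, hw⟩ := hS _ hb.1 _ hb'.1 hne
  have hwb : w ≠ b := fun h => hnot.1 (h ▸ hwS)
  have hwb' : w ≠ b' := fun h => hnot.2 (h ▸ hwS)
  rw [edgeDist_mk, edgeDist_mk, min_eq_left (hb.dist_le_dist (hG b w) hwb),
    min_eq_left (hb'.dist_le_dist (hG b' w) hwb')] at hw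
  exact hw rfl

end Resolving

namespace GapGraph

abbrev Vertex (k : ℕ) : Type := Fin k ⊕ (Fin k → Fin 3) ⊕ (Fin k → Bool) ⊕ Unit

variable {k : ℕ}

abbrev anchor (i : Fin k) : Vertex k := Sum.inl i
abbrev ternary (v : Fin k → Fin 3) : Vertex k := Sum.inr (Sum.inl v)
abbrev binary (T : Fin k → Bool) : Vertex k := Sum.inr (Sum.inr (Sum.inl T))
abbrev apex : Vertex k := Sum.inr (Sum.inr (Sum.inr ()))

def shadow (v : Fin k → Fin 3) : Fin k → Bool := fun i => v i = 2

def rel : Vertex k → Vertex k → Prop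
  | Sum.inl i, Sum.inr (Sum.inl v) => v i = 0
  | Sum.inl i, Sum.inr (Sum.inr (Sum.inl T)) => T i = false
  | Sum.inl _, Sum.inr (Sum.inr (Sum.inr _)) => True
  | Sum.inr (Sum.inl v), Sum.inr (Sum.inr (Sum.inl T)) => T = shadow v
  | Sum.inr (Sum.inr (Sum.inl _)), Sum.inr (Sum.inr (Sum.inr _)) => True
  | _, _ => False

def graph (k : ℕ) : SimpleGraph (Vertex k) := SimpleGraph.fromRel rel

lemma dominates_ternary (v : Fin k → Fin 3) :
    (graph k).Dominates (binary (shadow v)) (ternary v) := by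
  refine ⟨by simp [graph, rel], fun w hw => ?_⟩
  rcases w with i | u | T | ⟨⟩ <;> simp_all [graph, rel, shadow]

lemma connected : (graph k).Connected := by
  refine (connected_iff_exists_forall_reachable _).mpr ⟨apex, fun u => Reachable.symm ?_⟩
  rcases u with i | v | T | ⟨⟩
  · exact Adj.reachable (by simp [graph, rel])
  · exact (Adj.reachable (v := binary (shadow v)) (by simp [graph, rel])).trans
      (Adj.reachable (by simp [graph, rel]))
  · exact Adj.reachable (by simp [graph, rel])
  · rfl

lemma dist_ternary_anchor (v : Fin k → Fin 3) (j : Fin k) :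
    (graph k).dist (ternary v) (anchor j) = v j + 1 := by
  obtain h | h | h : v j = 0 ∨ v j = 1 ∨ v j = 2 := by omega
  · rw [h, Fin.val_zero, zero_add, dist_eq_one_iff_adj]
    simp [graph, rel, h]
  · rw [h]
    exact dist_eq_two_of_adj_of_adj (by simp) (by simp [graph, rel, h])
      (w := binary (shadow v)) (by simp [graph, rel]) (by simp [graph, rel, shadow, h])
  · rw [h]
    refine dist_eq_three_of_adj_of_adj_of_adj (y := binary (shadow v)) (z := apex) (by simp)
      (by simp [graph, rel, h]) (fun w hw => ?_) (by simp [graph, rel]) (by simp [graph, rel])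
      (by simp [graph, rel])
    rcases w with i | u | T | ⟨⟩ <;> simp_all [graph, rel, shadow]

lemma dist_binary_anchor (T : Fin k → Bool) (j : Fin k) :
    (graph k).dist (binary T) (anchor j) = (T j).toNat + 1 := by
  cases h : T j
  · rw [Bool.toNat_false, zero_add, dist_eq_one_iff_adj]
    simp [graph, rel, h]
  · exact dist_eq_two_of_adj_of_adj (by simp) (by simp [graph, rel, h]) (w := apex)
      (by simp [graph, rel]) (by simp [graph, rel])

lemma dist_ternary_apex (v : Fin k → Fin 3) : (graph k).dist (ternary v) apex = 2 :=
  dist_eq_two_of_adj_of_adj (by simp) (by simp [graph, rel]) (w := binary (shadow v))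
    (by simp [graph, rel]) (by simp [graph, rel])

lemma dist_binary_apex (T : Fin k → Bool) : (graph k).dist (binary T) apex = 1 := by
  rw [dist_eq_one_iff_adj]
  simp [graph, rel]

def landmarks (k : ℕ) : Finset (Vertex k) :=
  insert apex (Finset.univ.map ⟨anchor, Sum.inl_injective⟩)

lemma card_landmarks : (landmarks k).card = k + 1 := by
  simp [landmarks]

lemma isResolvingSet_landmarks : IsResolvingSet (graph k) (landmarks k) := by
  intro u u' huu'
  by_cases hu : u ∈ landmarks k
  · refine ⟨u, hu, ?_⟩
    rw [dist_self]
    exact (connected.pos_dist_of_ne huu'.symm).ne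
  by_cases hu' : u' ∈ landmarks k
  · refine ⟨u', hu', ?_⟩
    rw [dist_self]
    exact (connected.pos_dist_of_ne huu').ne'
  rcases u with i | v | T | ⟨⟩ <;> rcases u' with i' | v' | T' | ⟨⟩ <;>
    simp [landmarks] at hu hu'
  · obtain ⟨j, hj⟩ : ∃ j, v j ≠ v' j := Function.ne_iff.mp fun h => huu' (h ▸ rfl)
    refine ⟨anchor j, by simp [landmarks], ?_⟩
    rw [dist_ternary_anchor, dist_ternary_anchor]
    exact fun h => hj (Fin.ext (by omega))
  · exact ⟨apex, by simp [landmarks], by rw [dist_ternary_apex, dist_binary_apex]; decide⟩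
  · exact ⟨apex, by simp [landmarks], by rw [dist_ternary_apex, dist_binary_apex]; decide⟩
  · obtain ⟨j, hj⟩ : ∃ j, T j ≠ T' j := Function.ne_iff.mp fun h => huu' (h ▸ rfl)
    refine ⟨anchor j, by simp [landmarks], ?_⟩
    rw [dist_binary_anchor, dist_binary_anchor]
    exact fun h => hj (by cases hT : T j <;> cases hT' : T' j <;> simp_all)

lemma metricDim_le : metricDim (graph k) ≤ k + 1 :=
  card_landmarks (k := k) ▸ metricDim_le_card isResolvingSet_landmarks

lemma three_pow_le_card_add_of_isEdgeResolvingSet {S : Finset (Vertex k)}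
    (hS : IsEdgeResolvingSet (graph k) S) : 3 ^ k ≤ S.card + 2 ^ k := by
  classical
  let kept := Finset.univ.filter fun v : Fin k → Fin 3 => ternary v ∈ S
  let missed := Finset.univ.filter fun v : Fin k → Fin 3 => ternary v ∉ S
  have hkept : kept.card ≤ S.card :=
    Finset.card_le_card_of_injOn ternary (fun v hv => by simpa [kept] using hv)
      (fun v _ v' _ h => by simpa using h)
  have hmissed : missed.card ≤ 2 ^ k := by
    have hinj : Set.InjOn shadow (missed : Set (Fin k → Fin 3)) := by
      intro v hv v' hv' hvv'
      by_contra hne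
      have hdom' := dominates_ternary v'
      rw [← hvv'] at hdom'
      have := hS.mem_or_mem_of_dominates connected.preconnected (dominates_ternary v) hdom'
        (by simpa using hne)
      simp_all [missed]
    simpa using Finset.card_le_card_of_injOn shadow (t := Finset.univ) (by simp) hinj
  have hsplit : kept.card + missed.card = 3 ^ k := by
    simp [kept, missed, Finset.card_filter_add_card_filter_not]
  omega

lemma three_pow_le_edgeMetricDim_add : 3 ^ k ≤ edgeMetricDim (graph k) + 2 ^ k := by
  obtain ⟨S, hS, hcard⟩ :=
    exists_isEdgeResolvingSet_card_eq_edgeMetricDim connected.preconnected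
  exact hcard ▸ three_pow_le_card_add_of_isEdgeResolvingSet hS

lemma card_vertex : Fintype.card (Vertex k) = 3 ^ k + 2 ^ k + (k + 1) := by
  simp only [Fintype.card_sum, Fintype.card_fin, Fintype.card_fun, Fintype.card_bool,
    Fintype.card_unit]
  ring

end GapGraph

lemma eventually_mul_two_pow_le_three_pow (c : ℝ) :
    ∀ᶠ k : ℕ in Filter.atTop, c * 2 ^ k ≤ 3 ^ k := by
  have h32 : (1 : ℝ) < 3 / 2 := by norm_num
  filter_upwards [(tendsto_pow_atTop_atTop_of_one_lt h32).eventually_ge_atTop c] with k hk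
  calc c * 2 ^ k ≤ (3 / 2) ^ k * 2 ^ k := by gcongr
    _ = 3 ^ k := by rw [← mul_pow]; norm_num

/-- for every `ε > 0` and `C > 0` there is a finite connected graph `G`
with `edim(G) ≥ C · 2^(dim G)` and `edim(G) ≥ (1 - ε)|V(G)|`. -/
theorem statement15 (ε C : ℝ) (hε : 0 < ε) (hC : 0 < C) :
    ∃ (V : Type) (_ : Fintype V) (G : SimpleGraph V), G.Connected ∧
      C * (2 : ℝ) ^ (metricDim G) ≤ (edgeMetricDim G : ℝ) ∧
      (1 - ε) * (Fintype.card V : ℝ) ≤ (edgeMetricDim G : ℝ) := by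
  obtain ⟨k, hCk, hεk⟩ := ((eventually_mul_two_pow_le_three_pow (2 * C + 1)).and
    (eventually_mul_two_pow_le_three_pow (3 / ε))).exists
  have hdim : (2 : ℝ) ^ metricDim (GapGraph.graph k) ≤ 2 ^ (k + 1) :=
    pow_le_pow_right₀ one_le_two GapGraph.metricDim_le
  have hedim : (3 : ℝ) ^ k ≤ edgeMetricDim (GapGraph.graph k) + 2 ^ k := by
    exact_mod_cast GapGraph.three_pow_le_edgeMetricDim_add
  have hcard : (Fintype.card (GapGraph.Vertex k) : ℝ) = 3 ^ k + 2 ^ k + (k + 1) := by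
    exact_mod_cast GapGraph.card_vertex
  have hk : (k : ℝ) + 1 ≤ 2 ^ k := by exact_mod_cast Nat.lt_two_pow_self
  have hεk' : 3 * 2 ^ k ≤ ε * 3 ^ k := by
    rwa [div_mul_eq_mul_div, div_le_iff₀ hε, mul_comm (3 ^ k)] at hεk
  refine ⟨GapGraph.Vertex k, inferInstance, GapGraph.graph k, GapGraph.connected, ?_, ?_⟩
  · calc C * (2 : ℝ) ^ metricDim (GapGraph.graph k) ≤ C * 2 ^ (k + 1) := by gcongr
      _ ≤ 3 ^ k - 2 ^ k := by rw [pow_succ]; linarith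
      _ ≤ _ := by linarith
  · rw [hcard]
    linarith [mul_nonneg hε.le (by positivity : (0 : ℝ) ≤ 2 ^ k + (k + 1))]
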